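/- arXiv:2302.11002 — 4 statements merged into one kernel-verified Lean document; each statement's English description precedes it below -/
import Mathlib

section
/- Defining μ̃(σ) = μ - ΣGᵀ(σ²I + GΣGᵀ)⁻¹(Gμ - b) and μ* = μ - ΣGᵀ(GΣGᵀ)⁻¹(Gμ - b), the difference satisfies μ̃(σ) - μ* = σ²ΣGᵀ[σ²GΣGᵀ + (GΣGᵀ)²]⁻¹(Gμ - b). -/
open Matrix

namespace Matrix

variable {n : Type*} [Fintype n] [DecidableEq n] {α : Type*} [CommRing α]

theorem inv_sub_inv_smul_one_add (A : Matrix n n α) (c : α)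
    (h : IsUnit A ↔ IsUnit (c • 1 + A)) :
    A⁻¹ - (c • 1 + A)⁻¹ = c • (c • A + A * A)⁻¹ := by
  have hfactor : c • A + A * A = (c • 1 + A) * A := by
    rw [Matrix.add_mul, Matrix.smul_mul, Matrix.one_mul]
  rw [inv_sub_inv h, add_sub_cancel_right, hfactor, mul_inv_rev, Matrix.mul_smul,
    Matrix.mul_one, Matrix.smul_mul]

end Matrix

theorem stmt_8_general {n T : ℕ} (S : Matrix (Fin n) (Fin n) ℝ)
    (G : Matrix (Fin T) (Fin n) ℝ) (μ : Fin n → ℝ) (b : Fin T → ℝ) (σ : ℝ)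
    (hS : S.PosDef) (hG : LinearIndependent ℝ (fun i => G i)) :
    (μ - (S * Gᵀ * (σ ^ 2 • (1 : Matrix (Fin T) (Fin T) ℝ) + G * S * Gᵀ)⁻¹) *ᵥ (G *ᵥ μ - b))
      - (μ - (S * Gᵀ * (G * S * Gᵀ)⁻¹) *ᵥ (G *ᵥ μ - b))
      = (σ ^ 2 • (S * Gᵀ * (σ ^ 2 • (G * S * Gᵀ) + (G * S * Gᵀ) * (G * S * Gᵀ))⁻¹))
          *ᵥ (G *ᵥ μ - b) := by
  have hA : (G * S * Gᵀ).PosDef := by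
    simpa [conjTranspose_eq_transpose_of_trivial] using
      hS.mul_mul_conjTranspose_same (vecMul_injective_iff.mpr hG)
  have hM : (σ ^ 2 • (1 : Matrix (Fin T) (Fin T) ℝ) + G * S * Gᵀ).PosDef :=
    PosDef.posSemidef_add (PosSemidef.one.smul (sq_nonneg σ)) hA
  calc _ = (S * Gᵀ * (G * S * Gᵀ)⁻¹ - S * Gᵀ * (σ ^ 2 • 1 + G * S * Gᵀ)⁻¹)
          *ᵥ (G *ᵥ μ - b) := by
        rw [sub_mulVec]; abel
    _ = _ := by
        rw [← Matrix.mul_sub, inv_sub_inv_smul_one_add _ _ (iff_of_true hA.isUnit hM.isUnit),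
          Matrix.mul_smul]

theorem stmt_8 {n T : ℕ} (S : Matrix (Fin n) (Fin n) ℝ)
    (G : Matrix (Fin T) (Fin n) ℝ) (μ : Fin n → ℝ) (b : Fin T → ℝ) (σ : ℝ)
    (hS : S.PosDef) (hG : LinearIndependent ℝ (fun i => G i)) (hσ : 0 < σ) :
    (μ - (S * Gᵀ * (σ ^ 2 • (1 : Matrix (Fin T) (Fin T) ℝ) + G * S * Gᵀ)⁻¹) *ᵥ (G *ᵥ μ - b))
      - (μ - (S * Gᵀ * (G * S * Gᵀ)⁻¹) *ᵥ (G *ᵥ μ - b))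
      = (σ ^ 2 • (S * Gᵀ * (σ ^ 2 • (G * S * Gᵀ) + (G * S * Gᵀ) * (G * S * Gᵀ))⁻¹))
          *ᵥ (G *ᵥ μ - b) :=
  stmt_8_general S G μ b σ hS hG
end

section
/- As σ ↓ 0, the posterior means μ̃(σ) = μ - ΣGᵀ(σ²I + GΣGᵀ)⁻¹(Gμ - b) converge to μ* = μ - ΣGᵀ(GΣGᵀ)⁻¹(Gμ - b), with ‖μ̃(σ) - μ*‖_{Σ⁻¹} decreasing monotonically to 0. -/
/-!
Write `A = G Σ Gᵀ`, positive definite because the rows of `G` are independent, and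
`v = G μ - b`. Then `μ̃(σ) - μ* = Σ Gᵀ (A⁻¹ - (σ² + A)⁻¹) v`, so by the functional calculus of
`A`, `‖μ̃(σ) - μ*‖²_{Σ⁻¹} = vᵀ φ_{σ²}(A) v` with `φ_s(x) = (x⁻¹ - (s + x)⁻¹)² x`
(`posteriorGapWeight`). On `x > 0`, `φ_s(x)` increases with `s` and is at most `s² / x³`; in the
Loewner order this gives monotonicity and `‖μ̃(σ) - μ*‖_{Σ⁻¹} ≤ σ² (vᵀ A⁻³ v)^{1/2}`.
-/

open Matrix Filter
open scoped MatrixOrder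

noncomputable def posteriorGapWeight (s x : ℝ) : ℝ := (x⁻¹ - (s + x)⁻¹) ^ 2 * x

lemma posteriorGapWeight_le_of_le {x s t : ℝ} (hx : 0 < x) (hs : 0 ≤ s) (hst : s ≤ t) :
    posteriorGapWeight s x ≤ posteriorGapWeight t x := by
  have h₁ : (s + x)⁻¹ ≤ x⁻¹ := inv_anti₀ hx (by linarith)
  have h₂ : (t + x)⁻¹ ≤ (s + x)⁻¹ := inv_anti₀ (by linarith) (by linarith)
  unfold posteriorGapWeight
  gcongr

lemma posteriorGapWeight_le {x s : ℝ} (hx : 0 < x) (hs : 0 ≤ s) :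
    posteriorGapWeight s x ≤ s ^ 2 * (x ^ 3)⁻¹ := by
  have h : x⁻¹ - (s + x)⁻¹ = s / (x * (s + x)) := by field_simp; ring
  have hx2 : x ^ 2 ≤ (s + x) ^ 2 := by gcongr; linarith
  rw [posteriorGapWeight, h, div_pow, mul_pow]
  calc s ^ 2 / (x ^ 2 * (s + x) ^ 2) * x ≤ s ^ 2 / (x ^ 2 * x ^ 2) * x := by gcongr
    _ = s ^ 2 * (x ^ 3)⁻¹ := by field_simp

namespace Matrix

variable {ι m : Type*} [Fintype ι] [Fintype m]

lemma PosDef.mul_mul_transpose_of_linearIndependent {S : Matrix ι ι ℝ} (hS : S.PosDef)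
    {G : Matrix m ι ℝ} (hG : LinearIndependent ℝ fun i => G i) : (G * S * Gᵀ).PosDef := by
  simpa using hS.mul_mul_conjTranspose_same (vecMul_injective_iff.mpr hG)

lemma dotProduct_mulVec_le_of_le {B C : Matrix ι ι ℝ} (h : B ≤ C) (v : ι → ℝ) :
    v ⬝ᵥ (B *ᵥ v) ≤ v ⬝ᵥ (C *ᵥ v) := by
  have := (le_iff.mp h).dotProduct_mulVec_nonneg v
  simp only [star_trivial, sub_mulVec, dotProduct_sub] at this
  linarith

variable [DecidableEq ι]

lemma dotProduct_inv_mulVec_mul_transpose_mul {S : Matrix ι ι ℝ} (hS : S.IsHermitian)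
    (hSu : IsUnit S) (G : Matrix m ι ℝ) {M : Matrix m m ℝ} (hM : M.IsHermitian) (v : m → ℝ) :
    ((S * Gᵀ * M) *ᵥ v) ⬝ᵥ (S⁻¹ *ᵥ ((S * Gᵀ * M) *ᵥ v))
      = v ⬝ᵥ ((M * (G * S * Gᵀ) * M) *ᵥ v) := by
  have hSt : Sᵀ = S := by simpa using hS.eq
  have hMt : Mᵀ = M := by simpa using hM.eq
  have hX : (S * Gᵀ * M)ᵀ * S⁻¹ * (S * Gᵀ * M) = M * (G * S * Gᵀ) * M := by
    rw [transpose_mul, transpose_mul, transpose_transpose, hSt, hMt]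
    simp only [Matrix.mul_assoc]
    rw [← Matrix.mul_assoc S⁻¹, nonsing_inv_mul S ((isUnit_iff_isUnit_det S).mp hSu),
      Matrix.one_mul]
  rw [← hX]
  generalize S * Gᵀ * M = X
  rw [← mulVec_mulVec, ← mulVec_mulVec, dotProduct_mulVec v, vecMul_transpose]

variable {A : Matrix ι ι ℝ}

lemma dotProduct_cfc_mulVec_le {f g : ℝ → ℝ} (h : ∀ x ∈ spectrum ℝ A, f x ≤ g x) (v : ι → ℝ) :
    v ⬝ᵥ (cfc f A *ᵥ v) ≤ v ⬝ᵥ (cfc g A *ᵥ v) :=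
  dotProduct_mulVec_le_of_le
    (cfc_mono h (A.finite_real_spectrum.continuousOn f) (A.finite_real_spectrum.continuousOn g)) v

lemma cfc_mul_self_mul_cfc (hA : A.IsHermitian) (f g : ℝ → ℝ) :
    cfc f A * A * cfc g A = cfc (fun x => f x * x * g x) A := by
  have hc (h : ℝ → ℝ) : ContinuousOn h (spectrum ℝ A) := A.finite_real_spectrum.continuousOn h
  rw [cfc_mul (fun x => f x * x) g A (hc _) (hc _), cfc_mul f (fun x => x) A (hc _) (hc _),
    cfc_id' ℝ A hA.isSelfAdjoint]

lemma PosDef.inv_eq_cfc (hA : A.PosDef) : A⁻¹ = cfc (·⁻¹ : ℝ → ℝ) A := by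
  rw [cfc_ringInverse_id (a := A) hA.isUnit, nonsing_inv_eq_ringInverse]

lemma PosDef.smul_one_add_inv_eq_cfc (hA : A.PosDef) {s : ℝ} (hs : 0 ≤ s) :
    (s • 1 + A)⁻¹ = cfc (fun x => (s + x)⁻¹) A := by
  have hne : ∀ x ∈ spectrum ℝ A, s + x ≠ 0 := fun x hx =>
    (add_pos_of_nonneg_of_pos hs (hA.isStrictlyPositive.spectrum_pos hx)).ne'
  rw [cfc_inv (fun x => s + x) A hne, cfc_const_add s (fun x => x) A, cfc_id' ℝ A,
    nonsing_inv_eq_ringInverse, Algebra.algebraMap_eq_smul_one]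

lemma PosDef.inv_sub_inv_eq_cfc (hA : A.PosDef) {s : ℝ} (hs : 0 ≤ s) :
    A⁻¹ - (s • 1 + A)⁻¹ = cfc (fun x => x⁻¹ - (s + x)⁻¹) A := by
  rw [hA.inv_eq_cfc, hA.smul_one_add_inv_eq_cfc hs,
    cfc_sub (hf := A.finite_real_spectrum.continuousOn _)
      (hg := A.finite_real_spectrum.continuousOn _)]

variable [DecidableEq m] in
lemma PosDef.dotProduct_inv_mulVec_posteriorGap {S : Matrix ι ι ℝ} (hS : S.PosDef)
    {G : Matrix m ι ℝ} (hA : (G * S * Gᵀ).PosDef) {s : ℝ} (hs : 0 ≤ s) (v : m → ℝ) :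
    ((S * Gᵀ * ((G * S * Gᵀ)⁻¹ - (s • 1 + G * S * Gᵀ)⁻¹)) *ᵥ v) ⬝ᵥ
        (S⁻¹ *ᵥ ((S * Gᵀ * ((G * S * Gᵀ)⁻¹ - (s • 1 + G * S * Gᵀ)⁻¹)) *ᵥ v))
      = v ⬝ᵥ (cfc (posteriorGapWeight s) (G * S * Gᵀ) *ᵥ v) := by
  have hM := hA.inv_sub_inv_eq_cfc hs
  have hMh : ((G * S * Gᵀ)⁻¹ - (s • 1 + G * S * Gᵀ)⁻¹).IsHermitian :=
    hM ▸ cfc_predicate _ (G * S * Gᵀ)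
  rw [dotProduct_inv_mulVec_mul_transpose_mul hS.isHermitian hS.isUnit G hMh, hM,
    cfc_mul_self_mul_cfc hA.isHermitian]
  congr 3
  ext x
  rw [posteriorGapWeight]
  ring

lemma PosDef.dotProduct_cfc_posteriorGapWeight_le_of_le (hA : A.PosDef) {s t : ℝ} (hs : 0 ≤ s)
    (hst : s ≤ t) (v : ι → ℝ) :
    v ⬝ᵥ (cfc (posteriorGapWeight s) A *ᵥ v) ≤ v ⬝ᵥ (cfc (posteriorGapWeight t) A *ᵥ v) :=
  dotProduct_cfc_mulVec_le (fun _ hx =>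
    posteriorGapWeight_le_of_le (hA.isStrictlyPositive.spectrum_pos hx) hs hst) v

lemma PosDef.dotProduct_cfc_posteriorGapWeight_le (hA : A.PosDef) {s : ℝ} (hs : 0 ≤ s)
    (v : ι → ℝ) :
    v ⬝ᵥ (cfc (posteriorGapWeight s) A *ᵥ v)
      ≤ s ^ 2 * (v ⬝ᵥ (cfc (fun x : ℝ => (x ^ 3)⁻¹) A *ᵥ v)) := by
  have h := dotProduct_cfc_mulVec_le (fun _ hx =>
    posteriorGapWeight_le (hA.isStrictlyPositive.spectrum_pos hx) hs) v
  rwa [cfc_const_mul _ _ A (A.finite_real_spectrum.continuousOn _), smul_mulVec,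
    dotProduct_smul, smul_eq_mul] at h

end Matrix

theorem stmt_13_general {n T : ℕ} (S : Matrix (Fin n) (Fin n) ℝ)
    (G : Matrix (Fin T) (Fin n) ℝ) (μ : Fin n → ℝ) (b : Fin T → ℝ)
    (σ : ℕ → ℝ)
    (hS : S.PosDef) (hG : LinearIndependent ℝ (fun i => G i))
    (hσanti : Antitone σ)
    (hσlim : Tendsto σ atTop (nhds 0)) :
    let μt : ℕ → (Fin n → ℝ) := fun k =>
      μ - (S * Gᵀ * ((σ k) ^ 2 • (1 : Matrix (Fin T) (Fin T) ℝ) + G * S * Gᵀ)⁻¹)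
        *ᵥ (G *ᵥ μ - b)
    let μs : Fin n → ℝ := μ - (S * Gᵀ * (G * S * Gᵀ)⁻¹) *ᵥ (G *ᵥ μ - b)
    let d : ℕ → ℝ := fun k => Real.sqrt ((μt k - μs) ⬝ᵥ (S⁻¹ *ᵥ (μt k - μs)))
    Antitone d ∧ Tendsto d atTop (nhds 0) := by
  intro μt μs d
  set A := G * S * Gᵀ
  set v := G *ᵥ μ - b
  set C := v ⬝ᵥ (cfc (fun x : ℝ => (x ^ 3)⁻¹) A *ᵥ v)
  have hA : A.PosDef := hS.mul_mul_transpose_of_linearIndependent hG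
  have hσ (k : ℕ) : 0 ≤ σ k := hσanti.le_of_tendsto hσlim k
  have hd (k : ℕ) : d k = √(v ⬝ᵥ (cfc (posteriorGapWeight (σ k ^ 2)) A *ᵥ v)) := by
    have hdiff : μt k - μs = (S * Gᵀ * (A⁻¹ - (σ k ^ 2 • 1 + A)⁻¹)) *ᵥ v := by
      simp only [μt, μs, Matrix.mul_sub, sub_mulVec]
      abel
    simp only [d]
    rw [hdiff, hS.dotProduct_inv_mulVec_posteriorGap hA (sq_nonneg _)]
  have hbound (k : ℕ) : d k ≤ σ k ^ 2 * √C :=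
    calc d k ≤ √((σ k ^ 2) ^ 2 * C) :=
          hd k ▸ Real.sqrt_le_sqrt (hA.dotProduct_cfc_posteriorGapWeight_le (sq_nonneg _) v)
      _ = σ k ^ 2 * √C := by rw [Real.sqrt_mul (by positivity), Real.sqrt_sq (sq_nonneg _)]
  refine ⟨fun k l hkl => ?_, ?_⟩
  · rw [hd, hd]
    exact Real.sqrt_le_sqrt <| hA.dotProduct_cfc_posteriorGapWeight_le_of_le (sq_nonneg _)
      (pow_le_pow_left₀ (hσ l) (hσanti hkl) 2) v
  · have hlim : Tendsto (fun k => σ k ^ 2 * √C) atTop (nhds 0) := by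
      simpa using (hσlim.pow 2).mul_const √C
    exact squeeze_zero (fun k => Real.sqrt_nonneg _) hbound hlim

theorem stmt_13 {n T : ℕ} (S : Matrix (Fin n) (Fin n) ℝ)
    (G : Matrix (Fin T) (Fin n) ℝ) (μ : Fin n → ℝ) (b : Fin T → ℝ)
    (σ : ℕ → ℝ)
    (hS : S.PosDef) (hG : LinearIndependent ℝ (fun i => G i))
    (hσpos : ∀ k, 0 < σ k) (hσanti : Antitone σ)
    (hσlim : Tendsto σ atTop (nhds 0)) :
    let μt : ℕ → (Fin n → ℝ) := fun k =>
      μ - (S * Gᵀ * ((σ k) ^ 2 • (1 : Matrix (Fin T) (Fin T) ℝ) + G * S * Gᵀ)⁻¹)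
        *ᵥ (G *ᵥ μ - b)
    let μs : Fin n → ℝ := μ - (S * Gᵀ * (G * S * Gᵀ)⁻¹) *ᵥ (G *ᵥ μ - b)
    let d : ℕ → ℝ := fun k => Real.sqrt ((μt k - μs) ⬝ᵥ (S⁻¹ *ᵥ (μt k - μs)))
    Antitone d ∧ Tendsto d atTop (nhds 0) :=
  stmt_13_general S G μ b σ hS hG hσanti hσlim
end

section
/- As σ ↓ 0, the constraint residual ‖Gμ̃(σ) - b‖₂ decreases monotonically to 0, where μ̃(σ) = μ - ΣGᵀ(σ²I + GΣGᵀ)⁻¹(Gμ - b). -/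
/-!
Write `A = GΣGᵀ`, `v = Gμ - b` and `t = σ²`. Since `A (tI + A)⁻¹ = I - t (tI + A)⁻¹`, the residual
is `Gμ̃ - b = t (tI + A)⁻¹ v`. The rows of `G` are independent, so `A` is positive definite; in an
orthonormal eigenbasis of `A` with eigenvalues `λᵢ > 0` and coordinates `wᵢ` of `v`, the squared
residual is `∑ᵢ (t / (t + λᵢ))² wᵢ²`. Each factor `t / (t + λᵢ)` increases with `t ≥ 0` and vanishes
at `t = 0`, which gives both monotonicity and the limit.
-/

open Matrix Filter

namespace Matrix

variable {K : Type*} [CommRing K] {m n : Type*} [Fintype m] [DecidableEq m] [Fintype n]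

theorem smul_one_add_mulVec_residual (G : Matrix m n K) (S : Matrix n n K) (μ : n → K)
    (b : m → K) {t : K} (ht : IsUnit (t • 1 + G * S * Gᵀ).det) :
    (t • 1 + G * S * Gᵀ) *ᵥ
        (G *ᵥ (μ - (S * Gᵀ * (t • 1 + G * S * Gᵀ)⁻¹) *ᵥ (G *ᵥ μ - b)) - b)
      = t • (G *ᵥ μ - b) := by
  set P := t • 1 + G * S * Gᵀ
  have hGSG : G * S * Gᵀ * P⁻¹ = 1 - t • P⁻¹ := by
    rw [eq_sub_iff_add_eq, ← mul_nonsing_inv P ht]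
    simp only [P, Matrix.add_mul, Matrix.smul_mul, Matrix.one_mul, add_comm]
  have hres : G *ᵥ (μ - (S * Gᵀ * P⁻¹) *ᵥ (G *ᵥ μ - b)) - b = t • P⁻¹ *ᵥ (G *ᵥ μ - b) := by
    rw [mulVec_sub, mulVec_mulVec, sub_right_comm, ← Matrix.mul_assoc, ← Matrix.mul_assoc, hGSG,
      sub_mulVec, one_mulVec, sub_sub_cancel, smul_mulVec]
  rw [hres, mulVec_smul, mulVec_mulVec, mul_nonsing_inv _ ht, one_mulVec]

end Matrix

namespace Matrix.IsHermitian

variable {ι : Type*} [Fintype ι] [DecidableEq ι] {A : Matrix ι ι ℝ} (hA : A.IsHermitian)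

theorem eigenvectorBasis_dotProduct_mulVec (i : ι) (x : ι → ℝ) :
    hA.eigenvectorBasis i ⬝ᵥ (A *ᵥ x) = hA.eigenvalues i * (hA.eigenvectorBasis i ⬝ᵥ x) := by
  rw [dotProduct_mulVec, ← mulVec_transpose, ← conjTranspose_eq_transpose_of_trivial, hA.eq,
    mulVec_eigenvectorBasis, smul_dotProduct, smul_eq_mul]

theorem dotProduct_self_eq_sum_sq (x : ι → ℝ) :
    x ⬝ᵥ x = ∑ i, (hA.eigenvectorBasis i ⬝ᵥ x) ^ 2 := by
  have := hA.eigenvectorBasis.sum_sq_inner_right (WithLp.toLp 2 x)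
  rw [← real_inner_self_eq_norm_sq] at this
  simp only [EuclideanSpace.inner_eq_star_dotProduct, star_trivial] at this
  simp only [← this, dotProduct_comm x]

theorem dotProduct_self_of_smul_one_add_mulVec {c : ℝ} (hc : ∀ i, c + hA.eigenvalues i ≠ 0)
    {x y : ι → ℝ} (hxy : (c • 1 + A) *ᵥ x = y) :
    x ⬝ᵥ x = ∑ i, (hA.eigenvectorBasis i ⬝ᵥ y / (c + hA.eigenvalues i)) ^ 2 := by
  rw [hA.dotProduct_self_eq_sum_sq]
  refine Finset.sum_congr rfl fun i _ => ?_
  rw [← hxy, add_mulVec, dotProduct_add, hA.eigenvectorBasis_dotProduct_mulVec, smul_mulVec,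
    one_mulVec, dotProduct_smul, smul_eq_mul, ← add_mul, mul_div_cancel_left₀ _ (hc i)]

end Matrix.IsHermitian

noncomputable def shrinkageSumSq {ι : Type*} [Fintype ι] (lam w : ι → ℝ) (t : ℝ) : ℝ :=
  ∑ i, (t / (t + lam i)) ^ 2 * w i ^ 2

section shrinkage

variable {ι : Type*} [Fintype ι] {lam : ι → ℝ}

theorem div_add_le_div_add {c s t : ℝ} (hc : 0 < c) (hs : 0 ≤ s) (hst : s ≤ t) :
    s / (s + c) ≤ t / (t + c) := by
  rw [div_le_div_iff₀ (by positivity) (by linarith)]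
  nlinarith

theorem shrinkageSumSq_monotoneOn (hlam : ∀ i, 0 < lam i) (w : ι → ℝ) :
    MonotoneOn (shrinkageSumSq lam w) (Set.Ici 0) := by
  intro s hs t _ hst
  refine Finset.sum_le_sum fun i _ => mul_le_mul_of_nonneg_right ?_ (sq_nonneg _)
  have hs' : 0 ≤ s / (s + lam i) := div_nonneg hs (add_nonneg hs (hlam i).le)
  exact pow_le_pow_left₀ hs' (div_add_le_div_add (hlam i) hs hst) 2

theorem tendsto_shrinkageSumSq_zero (hlam : ∀ i, lam i ≠ 0) (w : ι → ℝ) :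
    Tendsto (shrinkageSumSq lam w) (nhds 0) (nhds 0) := by
  have hcont : ContinuousAt (shrinkageSumSq lam w) 0 := by
    unfold shrinkageSumSq
    fun_prop (disch := simpa using hlam _)
  simpa [shrinkageSumSq] using hcont.tendsto

end shrinkage

theorem stmt_14 {n T : ℕ} (S : Matrix (Fin n) (Fin n) ℝ)
    (G : Matrix (Fin T) (Fin n) ℝ) (μ : Fin n → ℝ) (b : Fin T → ℝ)
    (σ : ℕ → ℝ)
    (hS : S.PosDef) (hG : LinearIndependent ℝ (fun i => G i))
    (hσpos : ∀ k, 0 < σ k) (hσanti : Antitone σ)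
    (hσlim : Tendsto σ atTop (nhds 0)) :
    let μt : ℕ → (Fin n → ℝ) := fun k =>
      μ - (S * Gᵀ * ((σ k) ^ 2 • (1 : Matrix (Fin T) (Fin T) ℝ) + G * S * Gᵀ)⁻¹)
        *ᵥ (G *ᵥ μ - b)
    let r : ℕ → ℝ := fun k => Real.sqrt ((G *ᵥ μt k - b) ⬝ᵥ (G *ᵥ μt k - b))
    Antitone r ∧ Tendsto r atTop (nhds 0) := by
  intro μt r
  have hA : (G * S * Gᵀ).PosDef := by
    simpa using hS.mul_mul_conjTranspose_same (B := G) (vecMul_injective_iff.2 hG)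
  set hH := hA.isHermitian
  set w : Fin T → ℝ := fun i => hH.eigenvectorBasis i ⬝ᵥ (G *ᵥ μ - b)
  have hr : ∀ k, r k = √(shrinkageSumSq hH.eigenvalues w (σ k ^ 2)) := by
    intro k
    have ht : 0 < σ k ^ 2 := pow_pos (hσpos k) 2
    have hdet : IsUnit (σ k ^ 2 • 1 + G * S * Gᵀ).det :=
      (isUnit_iff_isUnit_det _).1 ((PosDef.one.smul ht).add hA).isUnit
    simp only [r, μt]
    rw [hH.dotProduct_self_of_smul_one_add_mulVec
      (fun i => (add_pos ht (hA.eigenvalues_pos i)).ne') (smul_one_add_mulVec_residual G S μ b hdet)]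
    simp only [shrinkageSumSq, w, dotProduct_smul, smul_eq_mul, mul_div_right_comm, mul_pow]
  constructor
  · intro k l hkl
    rw [hr, hr]
    exact Real.sqrt_le_sqrt <| shrinkageSumSq_monotoneOn hA.eigenvalues_pos w
      (Set.mem_Ici.2 (sq_nonneg _)) (Set.mem_Ici.2 (sq_nonneg _))
      (pow_le_pow_left₀ (hσpos l).le (hσanti hkl) 2)
  · have hσsq : Tendsto (fun k => σ k ^ 2) atTop (nhds 0) := by simpa using hσlim.pow 2
    rw [tendsto_congr hr]
    simpa using ((tendsto_shrinkageSumSq_zero (fun i => (hA.eigenvalues_pos i).ne') w).comp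
      hσsq).sqrt
end

section
/- Each diagonal entry of the updated covariance Σ̃(σ) = Σ - ΣGᵀ(σ²I + GΣGᵀ)⁻¹GΣ is at most the corresponding diagonal entry of Σ, and is monotone nondecreasing in σ (diagonal entries shrink as σ decreases). -/
/-!
The subtracted term `S Gᵀ N(σ)⁻¹ G S`, with `N(σ) = σ² I + G S Gᵀ`, is a congruence of the positive
semidefinite matrix `N(σ)⁻¹`, so it has nonnegative diagonal. For monotonicity, `N(σ₂)` is the
shift `N(σ₁) + t I` with `t = σ₂² - σ₁² ≥ 0`; since the shift commutes with `N(σ₁)`,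
`N(σ₁)⁻¹ - N(σ₂)⁻¹ = t (N(σ₂) N(σ₁))⁻¹ ⪰ 0`, and conjugating by `S Gᵀ` preserves this.
-/

open Matrix

namespace Matrix

variable {m n : Type*} [Fintype m] [Fintype n]

lemma PosSemidef.mul_transpose_mul_mul_mul_of_isHermitian {S : Matrix n n ℝ}
    (hS : S.IsHermitian) (G : Matrix m n ℝ) {P : Matrix m m ℝ} (hP : P.PosSemidef) :
    (S * Gᵀ * P * G * S).PosSemidef := by
  have h := hP.conjTranspose_mul_mul_same (G * S)
  rwa [conjTranspose_mul, hS.eq, conjTranspose_eq_transpose_of_trivial, ← Matrix.mul_assoc]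
    at h

variable [DecidableEq m]

lemma PosDef.posSemidef_inv_sub_inv_add_smul_one {A : Matrix m m ℝ} (hA : A.PosDef) {t : ℝ}
    (ht : 0 ≤ t) : (A⁻¹ - (A + t • 1)⁻¹).PosSemidef := by
  have hB : (A + t • 1).PosDef := hA.add_posSemidef (PosSemidef.one.smul ht)
  have hdiff : A⁻¹ - (A + t • 1)⁻¹ = t • ((A + t • 1) * A)⁻¹ := by
    rw [inv_sub_inv (iff_of_true hA.isUnit hB.isUnit), add_sub_cancel_left, mul_inv_rev,
      Matrix.mul_smul, Matrix.smul_mul, mul_one]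
  have hBA : (A + t • 1) * A = Aᴴ * A + t • A := by
    rw [add_mul, Matrix.smul_mul, one_mul, hA.isHermitian.eq]
  rw [hdiff, hBA]
  exact ((posSemidef_conjTranspose_mul_self A).add (hA.posSemidef.smul ht)).inv.smul ht

/-- The posterior covariance of a Gaussian prior `𝒩(μ, S)` after observing `G x + 𝒩(0, σ² I)`. -/
noncomputable def posteriorCov (S : Matrix n n ℝ) (G : Matrix m n ℝ) (σ : ℝ) : Matrix n n ℝ :=
  S - S * Gᵀ * (σ ^ 2 • 1 + G * S * Gᵀ)⁻¹ * G * S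

lemma posteriorCov_diag_le {S : Matrix n n ℝ} (hS : S.PosSemidef) (G : Matrix m n ℝ) (σ : ℝ)
    (i : n) : posteriorCov S G σ i i ≤ S i i := by
  have hN : (σ ^ 2 • 1 + G * S * Gᵀ).PosSemidef :=
    (PosSemidef.one.smul (sq_nonneg σ)).add (by
      simpa using hS.mul_mul_conjTranspose_same G)
  have := (hN.inv.mul_transpose_mul_mul_mul_of_isHermitian hS.isHermitian G).diag_nonneg (i := i)
  simp only [posteriorCov, sub_apply]
  linarith

lemma posteriorCov_sub_posteriorCov (S : Matrix n n ℝ) (G : Matrix m n ℝ) (σ₁ σ₂ : ℝ) :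
    posteriorCov S G σ₂ - posteriorCov S G σ₁ =
      S * Gᵀ * ((σ₁ ^ 2 • 1 + G * S * Gᵀ)⁻¹ - (σ₂ ^ 2 • 1 + G * S * Gᵀ)⁻¹) * G * S := by
  simp only [posteriorCov, Matrix.mul_sub, Matrix.sub_mul]
  abel

lemma posteriorCov_diag_le_of_sq_le {S : Matrix n n ℝ} (hS : S.PosDef) {G : Matrix m n ℝ}
    (hG : LinearIndependent ℝ G.row) {σ₁ σ₂ : ℝ} (h : σ₁ ^ 2 ≤ σ₂ ^ 2) (i : n) :
    posteriorCov S G σ₁ i i ≤ posteriorCov S G σ₂ i i := by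
  have hGSG : (G * S * Gᵀ).PosDef := by
    simpa using hS.mul_mul_conjTranspose_same (vecMul_injective_iff.mpr hG)
  have hN : (σ₁ ^ 2 • 1 + G * S * Gᵀ).PosDef :=
    hGSG.posSemidef_add (PosSemidef.one.smul (sq_nonneg σ₁))
  have hN₂ : σ₂ ^ 2 • 1 + G * S * Gᵀ = σ₁ ^ 2 • 1 + G * S * Gᵀ + (σ₂ ^ 2 - σ₁ ^ 2) • 1 := by
    rw [sub_smul]; abel
  have hdiff := (hN.posSemidef_inv_sub_inv_add_smul_one (sub_nonneg.mpr h)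
    ).mul_transpose_mul_mul_mul_of_isHermitian hS.isHermitian G
  rw [← hN₂, ← posteriorCov_sub_posteriorCov] at hdiff
  simpa [sub_nonneg] using hdiff.diag_nonneg (i := i)

end Matrix

theorem stmt_19 {n T : ℕ} (S : Matrix (Fin n) (Fin n) ℝ)
    (G : Matrix (Fin T) (Fin n) ℝ)
    (hS : S.PosDef) (hG : LinearIndependent ℝ (fun i => G i)) :
    let St : ℝ → Matrix (Fin n) (Fin n) ℝ := fun σ =>
      S - S * Gᵀ * (σ ^ 2 • (1 : Matrix (Fin T) (Fin T) ℝ) + G * S * Gᵀ)⁻¹ * G * S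
    (∀ σ : ℝ, 0 ≤ σ → ∀ i : Fin n, St σ i i ≤ S i i) ∧
    (∀ σ₁ σ₂ : ℝ, 0 ≤ σ₁ → σ₁ ≤ σ₂ → ∀ i : Fin n, St σ₁ i i ≤ St σ₂ i i) :=
  ⟨fun σ _ i => posteriorCov_diag_le hS.posSemidef G σ i,
    fun _ _ hσ₁ h i => posteriorCov_diag_le_of_sq_le hS hG (pow_le_pow_left₀ hσ₁ h 2) i⟩
end
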